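/- Let p̃ be a probability mass function on ℕ with finite support, with s̃ the maximum of its support, and let p̂ be the unique minimizer of Q over 𝒦, with ŝ the maximum of the support of p̂. Then F_{p̃}(ŝ + 1) = F_{p̂}(ŝ + 1), ŝ ≥ s̃, and p̂ ∈ 𝒞 (i.e., ∑_{i≥0} p̂(i) = 1). -/

import Mathlib

open scoped BigOperators

noncomputable section

/-- A discrete function `f : ℕ → ℝ` is convex if
`f(i+1) - 2 f(i) + f(i-1) ≥ 0` for every `i ≥ 1`. -/
def ConvexNat (f : ℕ → ℝ) : Prop :=
  ∀ i : ℕ, 0 ≤ f (i + 2) - 2 * f (i + 1) + f i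

/-- `𝒦`: convex, nonnegative functions on `ℕ` tending to `0` at infinity. -/
def MemK (f : ℕ → ℝ) : Prop :=
  ConvexNat f ∧ (∀ i, 0 ≤ f i) ∧ Filter.Tendsto f Filter.atTop (nhds 0)

/-- `𝒞`: elements of `𝒦` summing to one. -/
def MemC (f : ℕ → ℝ) : Prop := MemK f ∧ ∑' i, f i = 1

/-- The least squares criterion `Q(f) = (1/2) ∑ f(i)² − ∑ f(i) p̃(i)`. -/
def Crit (ptil f : ℕ → ℝ) : ℝ :=
  (1 / 2) * ∑' i, (f i) ^ 2 - ∑' i, f i * ptil i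

/-- A probability mass function on `ℕ` with finite support. -/
def IsFinPMF (p : ℕ → ℝ) : Prop :=
  (∀ i, 0 ≤ p i) ∧ (Function.support p).Finite ∧ ∑' i, p i = 1

/-- `s` is the maximum of the support of `p`. -/
def IsMaxSupport (p : ℕ → ℝ) (s : ℕ) : Prop :=
  p s ≠ 0 ∧ ∀ i, p i ≠ 0 → i ≤ s

/-- `F_p(j) = ∑_{i=0}^{j} p(i)`. -/
def Fcum (p : ℕ → ℝ) (j : ℕ) : ℝ := ∑ i ∈ Finset.range (j + 1), p i

/-- `H_p(j) = ∑_{i=0}^{j} F_p(i)`. -/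
def Hcum (p : ℕ → ℝ) (j : ℕ) : ℝ := ∑ i ∈ Finset.range (j + 1), Fcum p i

/-!
`p̂` vanishes beyond `ŝ` and, being convex with limit `0`, is nonincreasing. Hence for
`0 < ε ≤ p̂(ŝ)` lowering `p̂` by `ε` on `[0, ŝ]` stays in `𝒦`, and so does adding `ε` times a
tent `i ↦ (j + 1 - i)₊`, for any `ε > 0`. As `p̂` minimizes `Q`, the first variation of `Q` in
these directions is nonnegative. The first direction gives `F_p̂(ŝ) ≤ F_p̃(ŝ)`; pairing with the
tent gives `H_p̂(j) ≥ H_p̃(j)` for every `j ≥ max ŝ s̃`, where both sides grow linearly in `j` with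
slope the total mass, so `∑ p̂ ≥ ∑ p̃ = 1`. Together with `F_p̃(ŝ) ≤ 1` this forces
`F_p̂(ŝ) = F_p̃(ŝ) = 1`, so `p̃` vanishes beyond `ŝ`.
-/

open Filter Topology Finset

theorem IsMaxSupport.eq_zero_of_lt {p : ℕ → ℝ} {s : ℕ} (hs : IsMaxSupport p s) {i : ℕ}
    (hi : s < i) : p i = 0 := by
  by_contra h
  exact hi.not_ge (hs.2 i h)

theorem ConvexNat.monotone_sub {f : ℕ → ℝ} (hf : ConvexNat f) :
    Monotone fun i => f (i + 1) - f i :=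
  monotone_nat_of_le_succ fun i => by linarith [hf i]

theorem ConvexNat.antitone {f : ℕ → ℝ} {a : ℝ} (hf : ConvexNat f)
    (hlim : Tendsto f atTop (𝓝 a)) : Antitone f := by
  have hdiff : Tendsto (fun i => f (i + 1) - f i) atTop (𝓝 0) := by
    simpa using (hlim.comp (tendsto_add_atTop_nat 1)).sub hlim
  exact antitone_nat_of_succ_le fun i => by
    linarith [hf.monotone_sub.ge_of_tendsto hdiff i]

theorem MemK.add {f g : ℕ → ℝ} (hf : MemK f) (hg : MemK g) : MemK (fun i => f i + g i) :=
  ⟨fun i => by linarith [hf.1 i, hg.1 i], fun i => add_nonneg (hf.2.1 i) (hg.2.1 i),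
    by simpa using hf.2.2.add hg.2.2⟩

theorem MemK.const_mul {f : ℕ → ℝ} (hf : MemK f) {c : ℝ} (hc : 0 ≤ c) :
    MemK (fun i => c * f i) :=
  ⟨fun i => by nlinarith [hf.1 i], fun i => mul_nonneg hc (hf.2.1 i),
    by simpa using hf.2.2.const_mul c⟩

theorem MemK.add_mul_neg_indicator {f : ℕ → ℝ} {s : ℕ} (hf : MemK f)
    (hs : ∀ i, s < i → f i = 0) {ε : ℝ} (hε : 0 ≤ ε) (hεs : ε ≤ f s) :
    MemK (fun i => f i + ε * if i ≤ s then -1 else 0) := by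
  refine ⟨fun i => ?_, fun i => ?_, ?_⟩
  · have hconv := hf.1 i
    obtain h | rfl | rfl | h : i + 2 ≤ s ∨ s = i + 1 ∨ s = i ∨ s < i := by omega
    · simp only [if_pos h, if_pos (by omega : i + 1 ≤ s), if_pos (by omega : i ≤ s)]
      linarith
    · simp only [le_refl, if_true, if_pos (Nat.le_succ i), show ¬ i + 2 ≤ i + 1 by omega,
        if_false]
      linarith
    · simp only [le_refl, if_true, show ¬ s + 1 ≤ s by omega, show ¬ s + 2 ≤ s by omega,
        if_false, hs (s + 1) (by omega), hs (s + 2) (by omega)]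
      linarith
    · simp only [show ¬ i ≤ s by omega, show ¬ i + 1 ≤ s by omega, show ¬ i + 2 ≤ s by omega,
        if_false]
      linarith
  · dsimp only
    split_ifs with h
    · linarith [hf.1.antitone hf.2.2 h]
    · linarith [hf.2.1 i]
  · refine hf.2.2.congr' ((eventually_gt_atTop s).mono fun i hi => ?_)
    simp [hs i hi, show ¬ i ≤ s by omega]

section Cumulative

variable {p : ℕ → ℝ} {n : ℕ}

theorem Fcum_eq_tsum (hp : ∀ i, n < i → p i = 0) : Fcum p n = ∑' i, p i :=
  (tsum_eq_sum fun i hi => hp i (by simpa using hi)).symm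

theorem Fcum_eq_of_le (hp : ∀ i, n < i → p i = 0) {j : ℕ} (hj : n ≤ j) :
    Fcum p j = Fcum p n := by
  rw [Fcum_eq_tsum hp, Fcum_eq_tsum fun i hi => hp i (hj.trans_lt hi)]

theorem Fcum_le_tsum (hp : ∀ i, 0 ≤ p i) (hsum : Summable p) (j : ℕ) : Fcum p j ≤ ∑' i, p i :=
  hsum.sum_le_tsum _ fun i _ => hp i

theorem Hcum_succ (p : ℕ → ℝ) (j : ℕ) : Hcum p (j + 1) = Hcum p j + Fcum p (j + 1) :=
  sum_range_succ _ _

theorem Hcum_add (hp : ∀ i, n < i → p i = 0) (k : ℕ) :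
    Hcum p (n + k) = Hcum p n + k * Fcum p n := by
  induction k with
  | zero => simp
  | succ k ih =>
    rw [← add_assoc, Hcum_succ, ih, Fcum_eq_of_le hp (j := n + k + 1) (by omega)]
    push_cast; ring

theorem eq_zero_of_Fcum_eq_tsum (hp : ∀ i, 0 ≤ p i) (hsum : Summable p)
    (hF : Fcum p n = ∑' i, p i) {i : ℕ} (hi : n < i) : p i = 0 := by
  have hnot : i ∉ range (n + 1) := by simpa using hi
  have := hsum.sum_le_tsum (insert i (range (n + 1))) fun k _ => hp k
  rw [sum_insert hnot, ← Fcum, hF] at this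
  linarith [hp i]

end Cumulative

theorem nonneg_of_forall_nat_add_mul_nonneg {c a : ℝ} (h : ∀ k : ℕ, 0 ≤ c + k * a) : 0 ≤ a := by
  by_contra! ha
  obtain ⟨k, hk⟩ := exists_nat_gt (c / -a)
  rw [div_lt_iff₀ (neg_pos.2 ha)] at hk
  linarith [h k]

def tent (j i : ℕ) : ℝ := if i ≤ j then (j : ℝ) + 1 - i else 0

theorem tent_eq_zero {j i : ℕ} (h : j < i) : tent j i = 0 := if_neg (not_le.2 h)

theorem tent_succ {j i : ℕ} (h : i ≤ j + 1) : tent (j + 1) i = tent j i + 1 := by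
  rcases h.lt_or_eq with h | rfl
  · simp only [tent, if_pos h.le, if_pos (Nat.le_of_lt_succ h)]; push_cast; ring
  · simp [tent]

theorem memK_tent (j : ℕ) : MemK (tent j) := by
  refine ⟨fun i => ?_, fun i => ?_, ?_⟩
  · obtain h | rfl | rfl | h : i + 2 ≤ j ∨ j = i + 1 ∨ j = i ∨ j < i := by omega
    · simp only [tent, if_pos h, if_pos (by omega : i + 1 ≤ j), if_pos (by omega : i ≤ j)]
      push_cast; linarith
    · simp only [tent, show ¬ i + 2 ≤ i + 1 by omega, le_refl, Nat.le_succ, if_true, if_false]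
      push_cast; linarith
    · simp [tent]
    · simp [tent, show ¬ i ≤ j by omega, show ¬ i + 1 ≤ j by omega, show ¬ i + 2 ≤ j by omega]
  · unfold tent; split_ifs with h
    · have : (i : ℝ) ≤ j := Nat.cast_le.2 h
      linarith
    · exact le_rfl
  · exact tendsto_const_nhds.congr' <|
      (eventually_gt_atTop j).mono fun i hi => (tent_eq_zero hi).symm

theorem sum_mul_tent (p : ℕ → ℝ) (j : ℕ) :
    ∑ i ∈ range (j + 1), p i * tent j i = Hcum p j := by
  induction j with
  | zero => simp [tent, Hcum, Fcum]
  | succ j ih =>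
    have hshift : ∑ i ∈ range (j + 2), p i * tent (j + 1) i
        = ∑ i ∈ range (j + 2), p i * tent j i + Fcum p (j + 1) := by
      rw [Fcum, ← sum_add_distrib]
      refine sum_congr rfl fun i hi => ?_
      rw [tent_succ (Nat.lt_succ_iff.1 (mem_range.1 hi))]
      ring
    rw [hshift, sum_range_succ, ih, tent_eq_zero (Nat.lt_succ_self j), mul_zero, add_zero,
      Hcum_succ]

section FirstVariation

variable {ptil f g : ℕ → ℝ} {m : ℕ}

theorem crit_eq_sum (hf : ∀ i, m ≤ i → f i = 0) :
    Crit ptil f = ∑ i ∈ range m, (f i ^ 2 / 2 - f i * ptil i) := by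
  have hvanish : ∀ i ∉ range m, f i = 0 := fun i hi => hf i (by simpa using hi)
  rw [Crit, tsum_eq_sum (s := range m) fun i hi => by simp [hvanish i hi],
    tsum_eq_sum (s := range m) fun i hi => by simp [hvanish i hi], mul_sum, ← sum_sub_distrib]
  exact sum_congr rfl fun i _ => by ring

theorem crit_add_mul (hf : ∀ i, m ≤ i → f i = 0) (hg : ∀ i, m ≤ i → g i = 0) (ε : ℝ) :
    Crit ptil (fun i => f i + ε * g i) = Crit ptil f
      + ε * ∑ i ∈ range m, (f i - ptil i) * g i + ε ^ 2 / 2 * ∑ i ∈ range m, g i ^ 2 := by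
  rw [crit_eq_sum (fun i hi => by simp [hf i hi, hg i hi]), crit_eq_sum hf, mul_sum, mul_sum,
    ← sum_add_distrib, ← sum_add_distrib]
  exact sum_congr rfl fun i _ => by ring

theorem sum_sub_mul_nonneg_of_crit_le (hf : ∀ i, m ≤ i → f i = 0) (hg : ∀ i, m ≤ i → g i = 0)
    (hle : ∀ᶠ ε in 𝓝[>] 0, Crit ptil f ≤ Crit ptil (fun i => f i + ε * g i)) :
    0 ≤ ∑ i ∈ range m, (f i - ptil i) * g i := by
  set D := ∑ i ∈ range m, (f i - ptil i) * g i
  set A := ∑ i ∈ range m, g i ^ 2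
  have hquot : ∀ᶠ ε in 𝓝[>] 0, 0 ≤ D + ε / 2 * A := by
    filter_upwards [hle, self_mem_nhdsWithin] with ε hε (hpos : 0 < ε)
    rw [crit_add_mul hf hg] at hε
    refine nonneg_of_mul_nonneg_right ?_ hpos
    linarith
  have hlim : Tendsto (fun ε => D + ε / 2 * A) (𝓝[>] 0) (𝓝 D) := by
    refine tendsto_nhdsWithin_of_tendsto_nhds ?_
    simpa using ((continuous_id.div_const 2).mul continuous_const |>.const_add D).tendsto 0
  exact ge_of_tendsto hlim hquot

end FirstVariation

section Minimizer

variable {ptil f : ℕ → ℝ}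
  (hmin : ∀ h : ℕ → ℝ, MemK h → Summable (fun i => h i ^ 2) → Crit ptil f ≤ Crit ptil h)
include hmin

theorem sum_sub_mul_nonneg_of_isMin {g : ℕ → ℝ} {m : ℕ} (hf : ∀ i, m ≤ i → f i = 0)
    (hg : ∀ i, m ≤ i → g i = 0) (hK : ∀ᶠ ε in 𝓝[>] 0, MemK (fun i => f i + ε * g i)) :
    0 ≤ ∑ i ∈ range m, (f i - ptil i) * g i := by
  refine sum_sub_mul_nonneg_of_crit_le hf hg ?_
  filter_upwards [hK] with ε hε
  refine hmin _ hε (summable_of_ne_finset_zero (s := range m) fun i hi => ?_)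
  have hi : m ≤ i := by simpa using hi
  simp [hf i hi, hg i hi]

theorem Fcum_le_Fcum_of_isMin (hf : MemK f) {s : ℕ} (hs : IsMaxSupport f s) :
    Fcum f s ≤ Fcum ptil s := by
  have hvanish : ∀ i, s < i → f i = 0 := fun i => hs.eq_zero_of_lt
  have hpos : 0 < f s := (hf.2.1 s).lt_of_ne' hs.1
  have hfirst := sum_sub_mul_nonneg_of_isMin hmin (m := s + 1)
    (g := fun i => if i ≤ s then -1 else 0) hvanish (fun i hi => if_neg (by omega)) <| by
      filter_upwards [Ioc_mem_nhdsGT hpos] with ε hε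
      exact hf.add_mul_neg_indicator hvanish hε.1.le hε.2
  have hsum : ∑ i ∈ range (s + 1), (f i - ptil i) * (if i ≤ s then -1 else 0)
      = Fcum ptil s - Fcum f s := by
    rw [Fcum, Fcum, ← sum_sub_distrib]
    refine sum_congr rfl fun i hi => ?_
    rw [if_pos (Nat.lt_succ_iff.1 (mem_range.1 hi))]
    ring
  linarith

theorem Fcum_le_Fcum_of_isMin_of_vanish (hf : MemK f) {n : ℕ} (hfn : ∀ i, n < i → f i = 0)
    (hpn : ∀ i, n < i → ptil i = 0) : Fcum ptil n ≤ Fcum f n := by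
  have htent : ∀ k : ℕ, 0 ≤ Hcum f (n + k) - Hcum ptil (n + k) := fun k => by
    have hfirst := sum_sub_mul_nonneg_of_isMin hmin (m := n + k + 1) (g := tent (n + k))
      (fun i hi => hfn i (by omega)) (fun i hi => tent_eq_zero (by omega)) <| by
        filter_upwards [self_mem_nhdsWithin] with ε (hε : 0 < ε)
        exact hf.add ((memK_tent _).const_mul hε.le)
    simpa only [sub_mul, sum_sub_distrib, sum_mul_tent] using hfirst
  simp_rw [Hcum_add hfn, Hcum_add hpn] at htent
  have := nonneg_of_forall_nat_add_mul_nonneg (c := Hcum f n - Hcum ptil n)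
    (a := Fcum f n - Fcum ptil n) fun k => by linarith [htent k]
  linarith

end Minimizer

theorem stmt_14_general (ptil : ℕ → ℝ) (hptil : IsFinPMF ptil)
    (stil : ℕ) (hstil : IsMaxSupport ptil stil)
    (phat : ℕ → ℝ) (hphatK : MemK phat)
    (hmin : ∀ f : ℕ → ℝ, MemK f → Summable (fun i => (f i) ^ 2) →
      Crit ptil phat ≤ Crit ptil f)
    (shat : ℕ) (hshat : IsMaxSupport phat shat) :
    Fcum ptil (shat + 1) = Fcum phat (shat + 1) ∧
    stil ≤ shat ∧
    (∑' i : ℕ, phat i) = 1 := by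
  obtain ⟨hptil_nonneg, hptil_fin, hptil_one⟩ := hptil
  have hsum : Summable ptil := summable_of_hasFiniteSupport hptil_fin
  have hphat_vanish : ∀ i, shat < i → phat i = 0 := fun i => hshat.eq_zero_of_lt
  have hle_one : ∀ j, Fcum ptil j ≤ 1 := hptil_one ▸ Fcum_le_tsum hptil_nonneg hsum
  have hlower := Fcum_le_Fcum_of_isMin hmin hphatK hshat
  have hupper := Fcum_le_Fcum_of_isMin_of_vanish hmin hphatK (n := max shat stil)
    (fun i hi => hphat_vanish i (by omega)) (fun i hi => hstil.eq_zero_of_lt (by omega))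
  rw [Fcum_eq_of_le hphat_vanish (le_max_left _ _),
    Fcum_eq_tsum fun i hi => hstil.eq_zero_of_lt (by omega), hptil_one] at hupper
  have hphat_one : Fcum phat shat = 1 := by linarith [hle_one shat]
  have hptil_vanish : ∀ i, shat < i → ptil i = 0 := fun i =>
    eq_zero_of_Fcum_eq_tsum hptil_nonneg hsum (by linarith [hle_one shat])
  refine ⟨?_, ?_, ?_⟩
  · rw [Fcum_eq_of_le hphat_vanish (Nat.le_succ _), Fcum_eq_of_le hptil_vanish (Nat.le_succ _),
      hphat_one]
    linarith [hle_one shat]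
  · exact not_lt.1 fun h => hstil.1 (hptil_vanish stil h)
  · rw [← Fcum_eq_tsum hphat_vanish, hphat_one]

/-- Lemma 3: `F_{p̃}(ŝ+1) = F_{p̂}(ŝ+1)`, `ŝ ≥ s̃`, and `p̂ ∈ 𝒞`. -/
theorem stmt_14 (ptil : ℕ → ℝ) (hptil : IsFinPMF ptil)
    (stil : ℕ) (hstil : IsMaxSupport ptil stil)
    (phat : ℕ → ℝ) (hphatK : MemK phat)
    (hphat2 : Summable (fun i => (phat i) ^ 2))
    (hmin : ∀ f : ℕ → ℝ, MemK f → Summable (fun i => (f i) ^ 2) →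
      Crit ptil phat ≤ Crit ptil f)
    (shat : ℕ) (hshat : IsMaxSupport phat shat) :
    Fcum ptil (shat + 1) = Fcum phat (shat + 1) ∧
    stil ≤ shat ∧
    (∑' i : ℕ, phat i) = 1 :=
  stmt_14_general ptil hptil stil hstil phat hphatK hmin shat hshat

end
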